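/- arXiv:2306.02030 — 4 statements merged into one kernel-verified Lean document; each statement's English description precedes it below -/
import Mathlib

section
/- Let a > -1, b > -1 with a + b ≥ -1, d > 0, and T > 0. Define K(ρ) = sup_{t∈[0,T]} t^d ∫₀¹ e^{-ρ t (1-v)} v^a (1-v)^b dv for ρ > 0. Then K(ρ) → 0 as ρ → ∞. -/
open MeasureTheory Filter Set

lemma beta_intable (a b : ℝ) (ha : -1 < a) (hb : -1 < b) :
    IntervalIntegrable (fun v : ℝ => v ^ a * (1 - v) ^ b) volume 0 1 := by
  have h1 : IntervalIntegrable (fun v : ℝ => v ^ a * (1 - v) ^ b) volume 0 (1/2) := by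
    apply (intervalIntegral.intervalIntegrable_rpow' ha).mul_continuousOn
    apply ContinuousOn.rpow_const (by fun_prop)
    intro x hx
    rw [Set.uIcc_of_le (by norm_num)] at hx
    left; have := hx.2; intro h; linarith
  have h2 : IntervalIntegrable (fun v : ℝ => v ^ a * (1 - v) ^ b) volume (1/2) 1 := by
    have hg : IntervalIntegrable (fun v : ℝ => (1 - v) ^ b) volume (1/2) 1 := by
      have := (intervalIntegral.intervalIntegrable_rpow' hb (a := (0:ℝ)) (b := 1/2)).comp_sub_left 1
      norm_num at this
      exact this.symm
    apply hg.continuousOn_mul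
    apply ContinuousOn.rpow_const (by fun_prop)
    intro x hx
    rw [Set.uIcc_of_le (by norm_num)] at hx
    left; have := hx.1; intro h; linarith [h ▸ this]
  exact h1.trans h2


theorem stmt_0 (a b d T : ℝ) (ha : -1 < a) (hb : -1 < b) (hab : -1 ≤ a + b)
    (hd : 0 < d) (hT : 0 < T) :
    Tendsto (fun ρ : ℝ =>
        ⨆ t ∈ Set.Icc (0:ℝ) T,
          t ^ d * ∫ v in (0:ℝ)..1, Real.exp (-ρ * t * (1 - v)) * v ^ a * (1 - v) ^ b)
      atTop (nhds 0) := by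
  set ε : ℝ := min 1 (min d ((b+1)/2)) with hε_def
  have hε : 0 < ε := lt_min one_pos (lt_min hd (by linarith))
  have hε1 : ε ≤ 1 := min_le_left _ _
  have hεd : ε ≤ d := le_trans (min_le_right _ _) (min_le_left _ _)
  have hεb2 : ε ≤ (b+1)/2 := le_trans (min_le_right _ _) (min_le_right _ _)
  have hεb : -1 < b - ε := by linarith
  set C : ℝ := ∫ v in (0:ℝ)..1, v ^ a * (1 - v) ^ (b - ε) with hC_def
  have hC : 0 ≤ C := intervalIntegral.integral_nonneg zero_le_one
    (fun u hu => mul_nonneg (Real.rpow_nonneg hu.1 _) (Real.rpow_nonneg (by linarith [hu.2]) _))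
  have hInt2 : IntervalIntegrable (fun v : ℝ => v ^ a * (1 - v) ^ (b - ε)) volume 0 1 :=
    beta_intable a (b - ε) ha hεb
  -- the key estimate
  have key : ∀ ρ : ℝ, 0 < ρ → ∀ t ∈ Set.Icc (0:ℝ) T,
      t ^ d * ∫ v in (0:ℝ)..1, Real.exp (-ρ * t * (1 - v)) * v ^ a * (1 - v) ^ b
        ≤ (T ^ (d - ε) * C) * ρ ^ (-ε) := by
    intro ρ hρ t ht
    obtain ⟨ht0, htT⟩ := ht
    -- pointwise bound on (0,1)
    have hptw : ∀ v ∈ Ioo (0:ℝ) 1,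
        t ^ d * (Real.exp (-ρ * t * (1 - v)) * v ^ a * (1 - v) ^ b)
          ≤ T ^ (d - ε) * ρ ^ (-ε) * (v ^ a * (1 - v) ^ (b - ε)) := by
      intro v hv
      obtain ⟨hv0, hv1⟩ := hv
      have h1v : (0:ℝ) < 1 - v := by linarith
      rcases eq_or_lt_of_le ht0 with h | htpos
      · rw [← h, Real.zero_rpow hd.ne', zero_mul]
        positivity
      · set x : ℝ := ρ * t * (1 - v) with hx_def
        have hx : 0 < x := by positivity
        have hexp : Real.exp (-x) ≤ x ^ (-ε) := by
          rw [Real.exp_neg, Real.rpow_neg hx.le]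
          apply inv_anti₀ (Real.rpow_pos_of_pos hx ε)
          rcases le_total x 1 with hx1 | hx1
          · exact le_trans (Real.rpow_le_one hx.le hx1 hε.le) (Real.one_le_exp hx.le)
          · calc x ^ ε ≤ x ^ (1:ℝ) := Real.rpow_le_rpow_of_exponent_le hx1 hε1
              _ = x := Real.rpow_one x
              _ ≤ Real.exp x := by linarith [Real.add_one_le_exp x]
        have hxpow : x ^ (-ε) = ρ ^ (-ε) * t ^ (-ε) * (1 - v) ^ (-ε) := by
          rw [hx_def, Real.mul_rpow (by positivity) h1v.le,
            Real.mul_rpow hρ.le htpos.le]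
        calc t ^ d * (Real.exp (-ρ * t * (1 - v)) * v ^ a * (1 - v) ^ b)
            ≤ t ^ d * (x ^ (-ε) * v ^ a * (1 - v) ^ b) := by
              have : -ρ * t * (1 - v) = -x := by rw [hx_def]; ring
              rw [this]
              have h4 : 0 ≤ v ^ a := Real.rpow_nonneg hv0.le _
              have h5 : 0 ≤ (1 - v) ^ b := Real.rpow_nonneg h1v.le _
              have h6 : 0 ≤ t ^ d := Real.rpow_nonneg ht0 _
              exact mul_le_mul_of_nonneg_left
                (mul_le_mul_of_nonneg_right (mul_le_mul_of_nonneg_right hexp h4) h5) h6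
          _ = t ^ (d - ε) * ρ ^ (-ε) * (v ^ a * (1 - v) ^ (b - ε)) := by
              rw [hxpow, show d - ε = d + (-ε) by ring, show b - ε = b + (-ε) by ring,
                Real.rpow_add htpos, Real.rpow_add h1v]
              ring
          _ ≤ T ^ (d - ε) * ρ ^ (-ε) * (v ^ a * (1 - v) ^ (b - ε)) := by
              have h1 : t ^ (d - ε) ≤ T ^ (d - ε) := Real.rpow_le_rpow ht0 htT (by linarith)
              have h2 : (0:ℝ) ≤ ρ ^ (-ε) := Real.rpow_nonneg hρ.le _
              have h3 : (0:ℝ) ≤ v ^ a * (1 - v) ^ (b - ε) :=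
                mul_nonneg (Real.rpow_nonneg hv0.le _) (Real.rpow_nonneg h1v.le _)
              exact mul_le_mul_of_nonneg_right (mul_le_mul_of_nonneg_right h1 h2) h3
    -- integrability of the dominating function on Ioo 0 1
    have hgInt : IntegrableOn
        (fun v : ℝ => T ^ (d - ε) * ρ ^ (-ε) * (v ^ a * (1 - v) ^ (b - ε)))
        (Ioo (0:ℝ) 1) volume := by
      have := (hInt2.const_mul (T ^ (d - ε) * ρ ^ (-ε)))
      rw [intervalIntegrable_iff, uIoc_of_le zero_le_one] at this
      exact this.mono_set Ioo_subset_Ioc_self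
    -- integrability of the left-hand side on Ioo 0 1
    have hfInt : IntegrableOn
        (fun v : ℝ => t ^ d * (Real.exp (-ρ * t * (1 - v)) * v ^ a * (1 - v) ^ b))
        (Ioo (0:ℝ) 1) volume := by
      apply Integrable.mono' hgInt
      · apply ContinuousOn.aestronglyMeasurable _ measurableSet_Ioo
        apply ContinuousOn.mul continuousOn_const
        apply ContinuousOn.mul
        apply ContinuousOn.mul (by fun_prop)
        · exact ContinuousOn.rpow_const continuousOn_id (fun x hx => Or.inl hx.1.ne')
        · exact ContinuousOn.rpow_const (by fun_prop) (fun x hx => Or.inl (by linarith [hx.2]))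
      · filter_upwards [ae_restrict_mem measurableSet_Ioo] with v hv
        rw [Real.norm_of_nonneg]
        · exact hptw v hv
        · exact mul_nonneg (Real.rpow_nonneg ht0 _)
            (mul_nonneg (mul_nonneg (Real.exp_pos _).le (Real.rpow_nonneg hv.1.le _))
              (Real.rpow_nonneg (by linarith [hv.2]) _))
    calc t ^ d * ∫ v in (0:ℝ)..1, Real.exp (-ρ * t * (1 - v)) * v ^ a * (1 - v) ^ b
        = ∫ v in Ioo (0:ℝ) 1, t ^ d * (Real.exp (-ρ * t * (1 - v)) * v ^ a * (1 - v) ^ b) := by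
          rw [intervalIntegral.integral_of_le zero_le_one, integral_Ioc_eq_integral_Ioo,
            integral_const_mul]
      _ ≤ ∫ v in Ioo (0:ℝ) 1, T ^ (d - ε) * ρ ^ (-ε) * (v ^ a * (1 - v) ^ (b - ε)) :=
          setIntegral_mono_on hfInt hgInt measurableSet_Ioo hptw
      _ = T ^ (d - ε) * ρ ^ (-ε) * C := by
          rw [integral_const_mul, hC_def, intervalIntegral.integral_of_le zero_le_one,
            integral_Ioc_eq_integral_Ioo]
      _ = (T ^ (d - ε) * C) * ρ ^ (-ε) := by ring
  -- nonnegativity of the sup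
  have hS0 : ∀ ρ : ℝ, 0 ≤ ⨆ t ∈ Set.Icc (0:ℝ) T,
      t ^ d * ∫ v in (0:ℝ)..1, Real.exp (-ρ * t * (1 - v)) * v ^ a * (1 - v) ^ b := by
    intro ρ
    apply Real.iSup_nonneg
    intro t
    apply Real.iSup_nonneg
    intro ht
    apply mul_nonneg (Real.rpow_nonneg ht.1 _)
    apply intervalIntegral.integral_nonneg zero_le_one
    intro u hu
    have := (Real.exp_pos (-ρ * t * (1 - u))).le
    exact mul_nonneg (mul_nonneg this (Real.rpow_nonneg hu.1 _))
      (Real.rpow_nonneg (by linarith [hu.2]) _)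
  have hUB : Tendsto (fun ρ : ℝ => (T ^ (d - ε) * C) * ρ ^ (-ε)) atTop (nhds 0) := by
    have := (tendsto_rpow_neg_atTop hε).const_mul (T ^ (d - ε) * C)
    simpa using this
  apply tendsto_of_tendsto_of_tendsto_of_le_of_le' tendsto_const_nhds hUB
    (Eventually.of_forall hS0)
  filter_upwards [eventually_gt_atTop (0:ℝ)] with ρ hρ
  have hB0 : 0 ≤ (T ^ (d - ε) * C) * ρ ^ (-ε) := by
    apply mul_nonneg (mul_nonneg (Real.rpow_nonneg hT.le _) hC) (Real.rpow_nonneg hρ.le _)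
  apply Real.iSup_le _ hB0
  intro t
  apply Real.iSup_le _ hB0
  intro ht
  exact key ρ hρ t ht
end

section
/- For any nonnegative reals a, d with a + d < 1 and any ρ ≥ 1, there exists a positive constant c (depending only on a, d) such that for all t > 0, ∫₀^t e^{-ρ(t-r)} (t-r)^{-a} r^{-d} dr ≤ c ρ^{a+d-1}. -/
open MeasureTheory

private lemma aux_rpow_int (a u : ℝ) (ha1 : a < 1) :
    ∫ s in (0:ℝ)..u, s ^ (-a) = u ^ (1-a) / (1-a) := by
  rw [integral_rpow (Or.inl (by linarith))]
  rw [Real.zero_rpow (by linarith)]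
  ring_nf

private lemma aux_G_int (a ρ u : ℝ) (ha1 : a < 1) (hρ : 0 ≤ ρ) (hu : 0 ≤ u) :
    IntervalIntegrable (fun s => Real.exp (-ρ * s) * s ^ (-a)) volume 0 u := by
  apply (intervalIntegral.intervalIntegrable_rpow' (show (-1:ℝ) < -a by linarith)).mono_fun
  · apply Measurable.aestronglyMeasurable
    fun_prop
  · filter_upwards [MeasureTheory.ae_restrict_mem measurableSet_uIoc] with x hx
    rw [Set.uIoc_of_le hu] at hx
    have hx0 : 0 < x := hx.1
    have h1 : Real.exp (-ρ * x) ≤ 1 := by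
      rw [Real.exp_le_one_iff]; nlinarith
    have h2 : 0 ≤ x ^ (-a) := Real.rpow_nonneg hx0.le _
    simp only [Real.norm_eq_abs, abs_mul, abs_of_nonneg h2,
      abs_of_nonneg (Real.exp_nonneg _)]
    nlinarith [Real.exp_pos (-ρ*x)]

private lemma aux_exp_int (ρ p q : ℝ) (hρ : 0 < ρ) :
    ∫ s in p..q, Real.exp (-ρ * s) = (Real.exp (-ρ*p) - Real.exp (-ρ*q)) / ρ := by
  have := intervalIntegral.integral_comp_mul_left (fun x => Real.exp x)
    (show -ρ ≠ 0 by linarith) (a := p) (b := q)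
  rw [this, integral_exp]
  rw [smul_eq_mul, inv_neg, div_eq_inv_mul]
  ring

private lemma aux_G_le0 (a ρ u : ℝ) (ha1 : a < 1) (hρ : 0 ≤ ρ) (hu : 0 ≤ u) :
    ∫ s in (0:ℝ)..u, Real.exp (-ρ * s) * s ^ (-a) ≤ u ^ (1-a) / (1-a) := by
  have h1 : ∫ s in (0:ℝ)..u, Real.exp (-ρ * s) * s ^ (-a) ≤ ∫ s in (0:ℝ)..u, s ^ (-a) := by
    apply intervalIntegral.integral_mono_on hu (aux_G_int a ρ u ha1 hρ hu)
      (intervalIntegral.intervalIntegrable_rpow' (by linarith))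
    intro x hx
    have h2 : 0 ≤ x ^ (-a) := Real.rpow_nonneg hx.1 _
    have h3 : Real.exp (-ρ * x) ≤ 1 := by
      rw [Real.exp_le_one_iff]; nlinarith [hx.1]
    exact mul_le_of_le_one_left h2 h3
  rw [aux_rpow_int a u ha1] at h1
  exact h1

private lemma aux_inv_rpow (ρ p : ℝ) (hρ : 0 < ρ) : (1/ρ) ^ p = ρ ^ (-p) := by
  rw [one_div, Real.inv_rpow hρ.le, ← Real.rpow_neg hρ.le]

private lemma aux_J_bound (a ρ h : ℝ) (ha : 0 ≤ a) (ha1 : a < 1) (hρ : 1 ≤ ρ) (hh : 1/ρ < h) :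
    ∫ s in (0:ℝ)..h, Real.exp (-ρ * s) * s ^ (-a) ≤ (1/(1-a) + 1) * ρ ^ (a-1) := by
  have hρ0 : 0 < ρ := by linarith
  have hip : 0 < 1/ρ := by positivity
  have hih : 1/ρ ≤ h := hh.le
  have hh0 : 0 ≤ h := by linarith
  have int1 := aux_G_int a ρ (1/ρ) ha1 hρ0.le hip.le
  have intfull := aux_G_int a ρ h ha1 hρ0.le hh0
  have int2 : IntervalIntegrable (fun s => Real.exp (-ρ * s) * s ^ (-a)) volume (1/ρ) h := by
    apply intfull.mono_set'
    rw [Set.uIoc_of_le hih, Set.uIoc_of_le hh0]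
    exact Set.Ioc_subset_Ioc hip.le le_rfl
  rw [← intervalIntegral.integral_add_adjacent_intervals int1 int2]
  have b1 : ∫ s in (0:ℝ)..(1/ρ), Real.exp (-ρ*s) * s^(-a) ≤ ρ^(a-1) / (1-a) := by
    have h1 := aux_G_le0 a ρ (1/ρ) ha1 hρ0.le hip.le
    rwa [aux_inv_rpow ρ (1-a) hρ0, neg_sub] at h1
  have b2 : ∫ s in (1/ρ)..h, Real.exp (-ρ*s) * s^(-a) ≤ ρ^(a-1) := by
    have hmono : ∫ s in (1/ρ)..h, Real.exp (-ρ*s) * s^(-a)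
        ≤ ∫ s in (1/ρ)..h, ρ^a * Real.exp (-ρ*s) := by
      apply intervalIntegral.integral_mono_on hih int2
        ((by fun_prop : Continuous fun s : ℝ => ρ^a * Real.exp (-ρ*s)).intervalIntegrable _ _)
      intro x hx
      have hxa : x ^ (-a) ≤ ρ ^ a := by
        have h1 : x ^ (-a) ≤ (1/ρ) ^ (-a) :=
          Real.rpow_le_rpow_of_nonpos hip hx.1 (by linarith)
        rwa [aux_inv_rpow ρ (-a) hρ0, neg_neg] at h1
      calc Real.exp (-ρ*x) * x^(-a) ≤ Real.exp (-ρ*x) * ρ^a :=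
            mul_le_mul_of_nonneg_left hxa (Real.exp_nonneg _)
        _ = ρ^a * Real.exp (-ρ*x) := mul_comm _ _
    rw [intervalIntegral.integral_const_mul, aux_exp_int ρ (1/ρ) h hρ0] at hmono
    have he : (Real.exp (-ρ*(1/ρ)) - Real.exp (-ρ*h))/ρ ≤ 1/ρ := by
      have e1 : Real.exp (-ρ*(1/ρ)) ≤ 1 := by
        rw [Real.exp_le_one_iff]
        have : ρ * (1/ρ) = 1 := by field_simp
        nlinarith
      have e2 : 0 ≤ Real.exp (-ρ*h) := Real.exp_nonneg _
      gcongr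
      linarith
    calc ∫ s in (1/ρ)..h, Real.exp (-ρ*s) * s^(-a)
        ≤ ρ^a * ((Real.exp (-ρ*(1/ρ)) - Real.exp (-ρ*h))/ρ) := hmono
      _ ≤ ρ^a * (1/ρ) := mul_le_mul_of_nonneg_left he (Real.rpow_nonneg hρ0.le a)
      _ = ρ^(a-1) := by
          rw [Real.rpow_sub hρ0, Real.rpow_one, one_div, div_eq_mul_inv]
  calc (∫ s in (0:ℝ)..(1/ρ), Real.exp (-ρ*s) * s^(-a))
        + ∫ s in (1/ρ)..h, Real.exp (-ρ*s) * s^(-a)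
      ≤ ρ^(a-1)/(1-a) + ρ^(a-1) := add_le_add b1 b2
    _ = (1/(1-a) + 1) * ρ^(a-1) := by ring

theorem stmt_1 (a d : ℝ) (ha : 0 ≤ a) (hd : 0 ≤ d) (had : a + d < 1) :
    ∃ c : ℝ, 0 < c ∧ ∀ ρ : ℝ, 1 ≤ ρ → ∀ t : ℝ, 0 < t →
      (∫ r in (0:ℝ)..t, Real.exp (-ρ * (t - r)) * (t - r) ^ (-a) * r ^ (-d))
        ≤ c * ρ ^ (a + d - 1) := by
  have ha1 : a < 1 := by linarith
  have hd1 : d < 1 := by linarith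
  have h1a : (0:ℝ) < 1 - a := by linarith
  have h1d : (0:ℝ) < 1 - d := by linarith
  refine ⟨1/(1-a) + 1 + 1/(1-d), by positivity, ?_⟩
  intro ρ hρ t ht
  have hρ0 : 0 < ρ := by linarith
  obtain ⟨h, hdef⟩ : ∃ h : ℝ, h = t/2 := ⟨t/2, rfl⟩
  have hh0 : 0 < h := by rw [hdef]; linarith
  have hht : h < t := by rw [hdef]; linarith
  have e : t - h = h := by rw [hdef]; ring
  have hρpow : 0 < ρ ^ (a + d - 1) := Real.rpow_pos_of_pos hρ0 _
  -- integrability of the inner factor on h..t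
  have int_sub : IntervalIntegrable
      (fun r => Real.exp (-ρ * (t - r)) * (t - r) ^ (-a)) volume h t := by
    have h2 := (aux_G_int a ρ h ha1 hρ0.le hh0.le).comp_sub_left t
    rw [e, sub_zero] at h2
    exact h2.symm
  -- integrability of f on h..t
  have int2 : IntervalIntegrable
      (fun r => Real.exp (-ρ * (t - r)) * (t - r) ^ (-a) * r ^ (-d)) volume h t := by
    apply (int_sub.const_mul (h ^ (-d))).mono_fun
    · apply Measurable.aestronglyMeasurable; fun_prop
    · filter_upwards [MeasureTheory.ae_restrict_mem measurableSet_uIoc] with x hx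
      rw [Set.uIoc_of_le hht.le] at hx
      have hx1 : h < x := hx.1
      have hx2 : x ≤ t := hx.2
      have htx0 : 0 ≤ t - x := by linarith
      have hE : 0 ≤ Real.exp (-ρ * (t - x)) * (t - x) ^ (-a) :=
        mul_nonneg (Real.exp_nonneg _) (Real.rpow_nonneg htx0 _)
      have hxd : x ^ (-d) ≤ h ^ (-d) :=
        Real.rpow_le_rpow_of_nonpos hh0 hx1.le (by linarith)
      have hfx : 0 ≤ Real.exp (-ρ * (t - x)) * (t - x) ^ (-a) * x ^ (-d) :=
        mul_nonneg hE (Real.rpow_nonneg (by linarith [hx.1] : (0:ℝ) ≤ x) _)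
      have hgx : 0 ≤ h ^ (-d) * (Real.exp (-ρ * (t - x)) * (t - x) ^ (-a)) :=
        mul_nonneg (Real.rpow_nonneg hh0.le _) hE
      simp only [Real.norm_eq_abs, abs_of_nonneg hfx, abs_of_nonneg hgx]
      calc Real.exp (-ρ * (t - x)) * (t - x) ^ (-a) * x ^ (-d)
          ≤ Real.exp (-ρ * (t - x)) * (t - x) ^ (-a) * h ^ (-d) :=
            mul_le_mul_of_nonneg_left hxd hE
        _ = h ^ (-d) * (Real.exp (-ρ * (t - x)) * (t - x) ^ (-a)) := by ring
  -- pointwise bound on [0, h]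
  have ptw1 : ∀ x ∈ Set.Icc (0:ℝ) h,
      Real.exp (-ρ * (t - x)) * (t - x) ^ (-a) * x ^ (-d)
        ≤ (Real.exp (-ρ * h) * h ^ (-a)) * x ^ (-d) := by
    intro x hx
    have hx1 : 0 ≤ x := hx.1
    have hx2 : x ≤ h := hx.2
    have htx : h ≤ t - x := by linarith
    have hE1 : Real.exp (-ρ * (t - x)) ≤ Real.exp (-ρ * h) := by
      apply Real.exp_le_exp.mpr; nlinarith
    have hE2 : (t - x) ^ (-a) ≤ h ^ (-a) :=
      Real.rpow_le_rpow_of_nonpos hh0 htx (by linarith)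
    have hxd : 0 ≤ x ^ (-d) := Real.rpow_nonneg hx1 _
    apply mul_le_mul_of_nonneg_right _ hxd
    exact mul_le_mul hE1 hE2 (Real.rpow_nonneg (by linarith) _) (Real.exp_nonneg _)
  -- integrability of f on 0..h
  have int1 : IntervalIntegrable
      (fun r => Real.exp (-ρ * (t - r)) * (t - r) ^ (-a) * r ^ (-d)) volume 0 h := by
    apply ((intervalIntegral.intervalIntegrable_rpow'
        (show (-1:ℝ) < -d by linarith)).const_mul (Real.exp (-ρ * h) * h ^ (-a))).mono_fun
    · apply Measurable.aestronglyMeasurable; fun_prop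
    · filter_upwards [MeasureTheory.ae_restrict_mem measurableSet_uIoc] with x hx
      rw [Set.uIoc_of_le hh0.le] at hx
      have htx0 : 0 ≤ t - x := by linarith [hx.2]
      have hfx : 0 ≤ Real.exp (-ρ * (t - x)) * (t - x) ^ (-a) * x ^ (-d) :=
        mul_nonneg (mul_nonneg (Real.exp_nonneg _) (Real.rpow_nonneg htx0 _))
          (Real.rpow_nonneg hx.1.le _)
      have hgx : 0 ≤ Real.exp (-ρ * h) * h ^ (-a) * x ^ (-d) :=
        mul_nonneg (mul_nonneg (Real.exp_nonneg _) (Real.rpow_nonneg hh0.le _))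
          (Real.rpow_nonneg hx.1.le _)
      simp only [Real.norm_eq_abs, abs_of_nonneg hfx, abs_of_nonneg hgx]
      exact ptw1 x ⟨hx.1.le, hx.2⟩
  -- split the integral
  have hsplit : (∫ r in (0:ℝ)..t, Real.exp (-ρ * (t - r)) * (t - r) ^ (-a) * r ^ (-d))
      = (∫ r in (0:ℝ)..h, Real.exp (-ρ * (t - r)) * (t - r) ^ (-a) * r ^ (-d))
        + ∫ r in h..t, Real.exp (-ρ * (t - r)) * (t - r) ^ (-a) * r ^ (-d) :=
    (intervalIntegral.integral_add_adjacent_intervals int1 int2).symm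
  -- bound piece 1
  have hpow1 : h ^ (-a) * h ^ (1 - d) = h ^ (1 - (a + d)) := by
    rw [← Real.rpow_add hh0]; congr 1; ring
  have bound1 : (∫ r in (0:ℝ)..h, Real.exp (-ρ * (t - r)) * (t - r) ^ (-a) * r ^ (-d))
      ≤ Real.exp (-ρ * h) * h ^ (1 - (a + d)) / (1 - d) := by
    calc (∫ r in (0:ℝ)..h, Real.exp (-ρ * (t - r)) * (t - r) ^ (-a) * r ^ (-d))
        ≤ ∫ r in (0:ℝ)..h, (Real.exp (-ρ * h) * h ^ (-a)) * r ^ (-d) :=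
          intervalIntegral.integral_mono_on hh0.le int1
            ((intervalIntegral.intervalIntegrable_rpow'
              (show (-1:ℝ) < -d by linarith)).const_mul _) ptw1
      _ = (Real.exp (-ρ * h) * h ^ (-a)) * (h ^ (1 - d) / (1 - d)) := by
          rw [intervalIntegral.integral_const_mul, aux_rpow_int d h hd1]
      _ = Real.exp (-ρ * h) * (h ^ (-a) * h ^ (1 - d)) / (1 - d) := by ring
      _ = Real.exp (-ρ * h) * h ^ (1 - (a + d)) / (1 - d) := by rw [hpow1]
  -- change of variables for piece 2
  have hcv : (∫ r in h..t, Real.exp (-ρ * (t - r)) * (t - r) ^ (-a))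
      = ∫ s in (0:ℝ)..h, Real.exp (-ρ * s) * s ^ (-a) := by
    have h2 := intervalIntegral.integral_comp_sub_left
      (fun s => Real.exp (-ρ * s) * s ^ (-a)) t (a := h) (b := t)
    simpa [e, sub_self] using h2
  -- bound piece 2 by h^(-d) * J
  have bound2 : (∫ r in h..t, Real.exp (-ρ * (t - r)) * (t - r) ^ (-a) * r ^ (-d))
      ≤ h ^ (-d) * ∫ s in (0:ℝ)..h, Real.exp (-ρ * s) * s ^ (-a) := by
    calc (∫ r in h..t, Real.exp (-ρ * (t - r)) * (t - r) ^ (-a) * r ^ (-d))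
        ≤ ∫ r in h..t, h ^ (-d) * (Real.exp (-ρ * (t - r)) * (t - r) ^ (-a)) := by
          apply intervalIntegral.integral_mono_on hht.le int2 (int_sub.const_mul _)
          intro x hx
          have hE : 0 ≤ Real.exp (-ρ * (t - x)) * (t - x) ^ (-a) :=
            mul_nonneg (Real.exp_nonneg _)
              (Real.rpow_nonneg (by linarith [hx.2] : (0:ℝ) ≤ t - x) _)
          have hxd : x ^ (-d) ≤ h ^ (-d) :=
            Real.rpow_le_rpow_of_nonpos hh0 hx.1 (by linarith)
          calc Real.exp (-ρ * (t - x)) * (t - x) ^ (-a) * x ^ (-d)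
              ≤ Real.exp (-ρ * (t - x)) * (t - x) ^ (-a) * h ^ (-d) :=
                mul_le_mul_of_nonneg_left hxd hE
            _ = h ^ (-d) * (Real.exp (-ρ * (t - x)) * (t - x) ^ (-a)) := by ring
      _ = h ^ (-d) * ∫ r in h..t, Real.exp (-ρ * (t - r)) * (t - r) ^ (-a) :=
          intervalIntegral.integral_const_mul _ _
      _ = h ^ (-d) * ∫ s in (0:ℝ)..h, Real.exp (-ρ * s) * s ^ (-a) := by rw [hcv]
  rw [hsplit]
  rcases le_or_gt h (1/ρ) with hc | hc
  · -- small t case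
    have hJ : (∫ s in (0:ℝ)..h, Real.exp (-ρ * s) * s ^ (-a)) ≤ h ^ (1-a) / (1-a) :=
      aux_G_le0 a ρ h ha1 hρ0.le hh0.le
    have hpow2 : h ^ (-d) * h ^ (1 - a) = h ^ (1 - (a + d)) := by
      rw [← Real.rpow_add hh0]; congr 1; ring
    have hhb : h ^ (1 - (a + d)) ≤ ρ ^ (a + d - 1) := by
      have h3 : h ^ (1 - (a + d)) ≤ (1/ρ) ^ (1 - (a + d)) :=
        Real.rpow_le_rpow hh0.le hc (by linarith)
      rwa [aux_inv_rpow ρ _ hρ0, show -(1 - (a + d)) = a + d - 1 by ring] at h3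
    have b2' : (∫ r in h..t, Real.exp (-ρ * (t - r)) * (t - r) ^ (-a) * r ^ (-d))
        ≤ ρ ^ (a + d - 1) / (1 - a) := by
      calc (∫ r in h..t, Real.exp (-ρ * (t - r)) * (t - r) ^ (-a) * r ^ (-d))
          ≤ h ^ (-d) * (h ^ (1-a) / (1-a)) := by
            refine bound2.trans (mul_le_mul_of_nonneg_left hJ (Real.rpow_nonneg hh0.le _))
        _ = h ^ (-d) * h ^ (1-a) / (1-a) := by ring
        _ = h ^ (1 - (a + d)) / (1-a) := by rw [hpow2]
        _ ≤ ρ ^ (a + d - 1) / (1 - a) := div_le_div_of_nonneg_right hhb h1a.le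
    have b1' : (∫ r in (0:ℝ)..h, Real.exp (-ρ * (t - r)) * (t - r) ^ (-a) * r ^ (-d))
        ≤ ρ ^ (a + d - 1) / (1 - d) := by
      refine bound1.trans ?_
      have hexp : Real.exp (-ρ * h) ≤ 1 := by
        rw [Real.exp_le_one_iff]; nlinarith
      have hnn : 0 ≤ h ^ (1 - (a + d)) := Real.rpow_nonneg hh0.le _
      calc Real.exp (-ρ * h) * h ^ (1 - (a + d)) / (1 - d)
          ≤ 1 * h ^ (1 - (a + d)) / (1 - d) := by
            apply div_le_div_of_nonneg_right _ h1d.le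
            exact mul_le_mul_of_nonneg_right hexp hnn
        _ = h ^ (1 - (a + d)) / (1 - d) := by ring
        _ ≤ ρ ^ (a + d - 1) / (1 - d) := div_le_div_of_nonneg_right hhb h1d.le
    have hfin : ρ ^ (a + d - 1) / (1 - a) + ρ ^ (a + d - 1) / (1 - d)
        ≤ (1/(1-a) + 1 + 1/(1-d)) * ρ ^ (a + d - 1) := by
      have h9 : ρ ^ (a + d - 1) / (1 - a) = (1/(1-a)) * ρ ^ (a + d - 1) := by ring
      have h10 : ρ ^ (a + d - 1) / (1 - d) = (1/(1-d)) * ρ ^ (a + d - 1) := by ring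
      rw [h9, h10]; nlinarith
    linarith
  · -- large t case
    have hJ := aux_J_bound a ρ h ha ha1 hρ hc
    have hhd : h ^ (-d) ≤ ρ ^ d := by
      have h3 : h ^ (-d) ≤ (1/ρ) ^ (-d) :=
        Real.rpow_le_rpow_of_nonpos (by positivity) hc.le (by linarith)
      rwa [aux_inv_rpow ρ _ hρ0, neg_neg] at h3
    have b2' : (∫ r in h..t, Real.exp (-ρ * (t - r)) * (t - r) ^ (-a) * r ^ (-d))
        ≤ (1/(1-a) + 1) * ρ ^ (a + d - 1) := by
      have hJnn : 0 ≤ ∫ s in (0:ℝ)..h, Real.exp (-ρ * s) * s ^ (-a) := by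
        apply intervalIntegral.integral_nonneg hh0.le
        intro x hx
        have : 0 ≤ x := hx.1
        positivity
      calc (∫ r in h..t, Real.exp (-ρ * (t - r)) * (t - r) ^ (-a) * r ^ (-d))
          ≤ h ^ (-d) * ((1/(1-a) + 1) * ρ ^ (a-1)) :=
            bound2.trans (mul_le_mul_of_nonneg_left hJ (Real.rpow_nonneg hh0.le _))
        _ ≤ ρ ^ d * ((1/(1-a) + 1) * ρ ^ (a-1)) := by
            apply mul_le_mul_of_nonneg_right hhd
            positivity
        _ = (1/(1-a) + 1) * (ρ ^ d * ρ ^ (a-1)) := by ring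
        _ = (1/(1-a) + 1) * ρ ^ (a + d - 1) := by
            rw [← Real.rpow_add hρ0]; congr 2; ring
    have b1' : (∫ r in (0:ℝ)..h, Real.exp (-ρ * (t - r)) * (t - r) ^ (-a) * r ^ (-d))
        ≤ ρ ^ (a + d - 1) / (1 - d) := by
      refine bound1.trans ?_
      obtain ⟨x, hxdef⟩ : ∃ x : ℝ, x = ρ * h := ⟨ρ * h, rfl⟩
      have hx1 : 1 < x := by
        rw [hxdef]
        rw [div_lt_iff₀ hρ0] at hc
        calc (1:ℝ) = 1 := rfl
          _ < h * ρ := hc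
          _ = ρ * h := mul_comm _ _
      have hx0 : 0 < x := by linarith
      have hkey : Real.exp (-ρ * h) * h ^ (1 - (a + d)) ≤ ρ ^ (a + d - 1) := by
        have hh_eq : h = x / ρ := by rw [hxdef]; field_simp
        have hxp : x ^ (1 - (a+d)) ≤ x := by
          have := Real.rpow_le_rpow_of_exponent_le hx1.le (show 1 - (a+d) ≤ 1 by linarith)
          rwa [Real.rpow_one] at this
        have hexpx : Real.exp (-x) * x ≤ 1 := by
          rw [Real.exp_neg]
          have h4 := Real.add_one_le_exp x
          have h5 := Real.exp_pos x
          rw [inv_mul_le_iff₀ h5]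
          nlinarith
        have hdiv : h ^ (1 - (a+d)) = x ^ (1 - (a+d)) * ρ ^ (a + d - 1) := by
          rw [hh_eq, Real.div_rpow hx0.le hρ0.le, div_eq_mul_inv,
            ← Real.rpow_neg hρ0.le]
          congr 2; ring
        have hexm : Real.exp (-ρ * h) = Real.exp (-x) := by rw [hxdef]; ring_nf
        rw [hexm, hdiv]
        have hxpnn : 0 ≤ x ^ (1 - (a+d)) := Real.rpow_nonneg hx0.le _
        calc Real.exp (-x) * (x ^ (1 - (a+d)) * ρ ^ (a + d - 1))
            = (Real.exp (-x) * x ^ (1 - (a+d))) * ρ ^ (a + d - 1) := by ring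
          _ ≤ 1 * ρ ^ (a + d - 1) := by
              apply mul_le_mul_of_nonneg_right _ hρpow.le
              calc Real.exp (-x) * x ^ (1 - (a+d)) ≤ Real.exp (-x) * x :=
                    mul_le_mul_of_nonneg_left hxp (Real.exp_nonneg _)
                _ ≤ 1 := hexpx
          _ = ρ ^ (a + d - 1) := one_mul _
      exact div_le_div_of_nonneg_right hkey h1d.le
    have hsum : (1/(1-a) + 1) * ρ ^ (a + d - 1) + ρ ^ (a + d - 1) / (1 - d)
        ≤ (1/(1-a) + 1 + 1/(1-d)) * ρ ^ (a + d - 1) := le_of_eq (by ring)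
    linarith
end

section
/- Let B generate a semigroup with ‖S_B(t)‖ ≤ e^{-λ_B t}, let g : V × V → V satisfy ‖g(x,y)‖ ≤ C₁(‖x‖+‖y‖) + C₂ with λ_B > C₁, and let Y^ε be a continuous mild solution of dY^ε = (1/ε) B Y^ε dt + (1/ε) g(X^ε(t), Y^ε(t)) dt + dω_{2,ε}(t) on [0,T] with Y^ε(0) = Y₀. Assume sup_{t∈[0,T]}‖X^ε(t)‖ ≤ M and sup_{t∈[0,T]}‖Z^ε(θ_t ω₂)‖ ≤ N, where Z^ε is the stationary Ornstein–Uhlenbeck process associated with (1/ε)B and ω_{2,ε}. Then sup_{t∈[0,T]} ‖Y^ε(t)‖ ≤ C(1 + M + ‖Y₀‖ + N) where C depends only on λ_B, C₁, C₂ but not on ε. -/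
/-!
The norm of `Y` attains its maximum `K` on `[0, T]` at some `t₀`. Evaluating the mild formula
at `t₀`, the contraction `‖S t‖ ≤ 1` bounds the first two terms by `‖Y₀‖ + 2N`, and the
convolution term by `(C₁ (M + K) + C₂) / λ_B`: the kernel `ε⁻¹ e^{-λ_B s / ε}` has total mass
at most `1 / λ_B`, whatever `ε`. Since `C₁ < λ_B`, the `K` on the right can be absorbed, giving
`K ≤ (λ_B (‖Y₀‖ + 2N) + C₁ M + C₂) / (λ_B - C₁)`.
-/

open MeasureTheory Real Set

lemma integral_exp_neg_mul_sub {a : ℝ} (ha : a ≠ 0) (t : ℝ) :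
    ∫ r in (0:ℝ)..t, exp (-a * (t - r)) = (1 - exp (-a * t)) / a := by
  have hderiv (r : ℝ) : HasDerivAt (fun r => exp (-a * (t - r)) / a) (exp (-a * (t - r))) r := by
    refine ((((hasDerivAt_id' r).const_sub t).const_mul (-a)).exp.div_const a).congr_deriv ?_
    field_simp
  rw [intervalIntegral.integral_eq_sub_of_hasDerivAt (fun r _ => hderiv r)
    (Continuous.intervalIntegrable (by fun_prop) _ _)]
  simp [sub_div]

lemma integral_exp_neg_mul_sub_le {a : ℝ} (ha : 0 < a) (t : ℝ) :
    ∫ r in (0:ℝ)..t, exp (-a * (t - r)) ≤ 1 / a := by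
  rw [integral_exp_neg_mul_sub ha.ne']
  gcongr
  linarith [(exp_pos (-a * t)).le]

lemma norm_integral_apply_sub_le_div {V : Type*} [NormedAddCommGroup V] [NormedSpace ℝ V]
    {S : ℝ → V →L[ℝ] V} {a : ℝ} (ha : 0 < a) (hS : ∀ s, 0 ≤ s → ‖S s‖ ≤ exp (-a * s))
    {f : ℝ → V} {t G : ℝ} (ht : 0 ≤ t) (hG : 0 ≤ G) (hf : ∀ r ∈ Ioc 0 t, ‖f r‖ ≤ G) :
    ‖∫ r in (0:ℝ)..t, S (t - r) (f r)‖ ≤ G / a := by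
  have hpoint : ∀ r ∈ Ioc 0 t, ‖S (t - r) (f r)‖ ≤ exp (-a * (t - r)) * G := fun r hr =>
    (S (t - r)).le_of_opNorm_le_of_le (hS _ (sub_nonneg.2 hr.2)) (hf r hr)
  calc ‖∫ r in (0:ℝ)..t, S (t - r) (f r)‖
      ≤ ∫ r in (0:ℝ)..t, exp (-a * (t - r)) * G :=
        intervalIntegral.norm_integral_le_of_norm_le ht (ae_of_all _ hpoint)
          (Continuous.intervalIntegrable (by fun_prop) _ _)
    _ = (∫ r in (0:ℝ)..t, exp (-a * (t - r))) * G := intervalIntegral.integral_mul_const _ _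
    _ ≤ 1 / a * G := by gcongr; exact integral_exp_neg_mul_sub_le ha t
    _ = G / a := by ring

lemma norm_mild_formula_le {V : Type*} [NormedAddCommGroup V] [NormedSpace ℝ V]
    {S : ℝ → V →L[ℝ] V} {lam ε : ℝ} (hlam : 0 < lam) (hε : 0 < ε)
    (hS : ∀ s, 0 ≤ s → ‖S s‖ ≤ exp (-(lam / ε) * s))
    {f : ℝ → V} {t G : ℝ} (ht : 0 ≤ t) (hG : 0 ≤ G) (hf : ∀ r ∈ Ioc 0 t, ‖f r‖ ≤ G)
    (y₀ z₀ z : V) :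
    ‖S t (y₀ - z₀) + z + ε⁻¹ • ∫ r in (0:ℝ)..t, S (t - r) (f r)‖ ≤
      ‖y₀‖ + ‖z₀‖ + ‖z‖ + G / lam := by
  have hcontr : ‖S t‖ ≤ 1 :=
    (hS t ht).trans (exp_le_one_iff.2 (by nlinarith [div_pos hlam hε]))
  have hconv : ‖ε⁻¹ • ∫ r in (0:ℝ)..t, S (t - r) (f r)‖ ≤ G / lam := by
    rw [norm_smul, norm_inv, norm_of_nonneg hε.le, inv_mul_le_iff₀ hε]
    calc ‖∫ r in (0:ℝ)..t, S (t - r) (f r)‖ ≤ G / (lam / ε) :=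
          norm_integral_apply_sub_le_div (div_pos hlam hε) hS ht hG hf
      _ = ε * (G / lam) := by field_simp
  calc ‖S t (y₀ - z₀) + z + ε⁻¹ • ∫ r in (0:ℝ)..t, S (t - r) (f r)‖
      ≤ ‖S t‖ * ‖y₀ - z₀‖ + ‖z‖ + G / lam := by
        refine norm_add₃_le.trans ?_
        gcongr
        exact (S t).le_opNorm _
    _ ≤ ‖y₀‖ + ‖z₀‖ + ‖z‖ + G / lam := by
        gcongr
        exact (mul_le_of_le_one_left (norm_nonneg _) hcontr).trans (norm_sub_le _ _)

lemma le_div_sub_of_le_add_div {K A M C₁ C₂ lam : ℝ} (hlam : C₁ < lam) (hlam0 : 0 < lam)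
    (hK : K ≤ A + (C₁ * (M + K) + C₂) / lam) :
    K ≤ (lam * A + C₁ * M + C₂) / (lam - C₁) := by
  rw [le_div_iff₀ (sub_pos.2 hlam)]
  rw [← sub_nonneg] at hK ⊢
  have := mul_nonneg hlam0.le hK
  field_simp at this
  linarith

theorem stmt_9 (lamB C₁ C₂ : ℝ) (hC₁ : 0 < C₁) (hlam : C₁ < lamB) (hC₂ : 0 ≤ C₂) :
    ∃ C : ℝ, 0 < C ∧
      ∀ (V : Type) [NormedAddCommGroup V] [NormedSpace ℝ V] [CompleteSpace V],
      ∀ (ε T : ℝ), 0 < ε → 0 < T →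
      ∀ (S : ℝ → V →L[ℝ] V), (∀ t : ℝ, 0 ≤ t → ‖S t‖ ≤ Real.exp (-(lamB / ε) * t)) →
      ∀ (g : V → V → V), (∀ x y : V, ‖g x y‖ ≤ C₁ * (‖x‖ + ‖y‖) + C₂) →
      Continuous (fun p : V × V => g p.1 p.2) →
      ∀ (X Y Z : ℝ → V) (Y₀ : V), Y 0 = Y₀ →
      ContinuousOn X (Set.Icc 0 T) → ContinuousOn Y (Set.Icc 0 T) →
      ∀ (M N : ℝ), 0 ≤ M → 0 ≤ N →
      (∀ t ∈ Set.Icc (0:ℝ) T, ‖X t‖ ≤ M) →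
      (∀ t ∈ Set.Icc (0:ℝ) T, ‖Z t‖ ≤ N) →
      (∀ t ∈ Set.Icc (0:ℝ) T,
        Y t = S t (Y₀ - Z 0) + Z t + ε⁻¹ • ∫ r in (0:ℝ)..t, S (t - r) (g (X r) (Y r))) →
      ∀ t ∈ Set.Icc (0:ℝ) T, ‖Y t‖ ≤ C * (1 + M + ‖Y₀‖ + N) := by
  have hlamB : 0 < lamB := hC₁.trans hlam
  have hgap : 0 < lamB - C₁ := sub_pos.2 hlam
  refine ⟨(2 * lamB + C₁ + C₂) / (lamB - C₁), by positivity, ?_⟩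
  intro V _ _ _ ε T hε hT S hS g hg _ X Y Z Y₀ _ _ hYc M N hM hN hXb hZb hmild t ht
  obtain ⟨t₀, ht₀, hmax⟩ := isCompact_Icc.exists_isMaxOn (nonempty_Icc.2 hT.le) hYc.norm
  have hK : ‖Y t₀‖ ≤ ‖Y₀‖ + 2 * N + (C₁ * (M + ‖Y t₀‖) + C₂) / lamB := by
    have hgK : ∀ r ∈ Ioc 0 t₀, ‖g (X r) (Y r)‖ ≤ C₁ * (M + ‖Y t₀‖) + C₂ := fun r hr => by
      have hr' : r ∈ Icc 0 T := ⟨hr.1.le, hr.2.trans ht₀.2⟩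
      exact (hg _ _).trans (by gcongr; exacts [hXb r hr', hmax hr'])
    calc ‖Y t₀‖ ≤ ‖Y₀‖ + ‖Z 0‖ + ‖Z t₀‖ + (C₁ * (M + ‖Y t₀‖) + C₂) / lamB := by
          nth_rw 1 [hmild t₀ ht₀]
          exact norm_mild_formula_le hlamB hε hS ht₀.1 (by positivity) hgK _ _ _
      _ ≤ _ := by linarith [hZb 0 ⟨le_rfl, hT.le⟩, hZb t₀ ht₀]
  calc ‖Y t‖ ≤ ‖Y t₀‖ := hmax ht
    _ ≤ (lamB * (‖Y₀‖ + 2 * N) + C₁ * M + C₂) / (lamB - C₁) :=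
        le_div_sub_of_le_add_div hlam hlamB hK
    _ ≤ (2 * lamB + C₁ + C₂) / (lamB - C₁) * (1 + M + ‖Y₀‖ + N) := by
        rw [div_mul_eq_mul_div]
        gcongr
        nlinarith [norm_nonneg Y₀]
end

section
/- Let γ ∈ (0,1), δ ∈ (0,1), T > δ, and let X : [0,T] → V satisfy the weighted Hölder bound sup_{0<r≤T} r_δ^γ e^{-ρ r} ‖X(r) − X(r_δ)‖ / (r − r_δ)^γ ≤ M where r_δ = ⌊r/δ⌋δ. Then for ρ > 0, sup_{t∈[δ,T]} e^{-ρ t} ∫_δ^t ‖X(r) − X(r_δ)‖ dr ≤ C M δ^γ T^{1-γ} for a constant C depending only on γ. -/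
open MeasureTheory

theorem stmt_13 (γ : ℝ) (hγ : γ ∈ Set.Ioo (0:ℝ) 1) :
    ∃ C : ℝ, 0 < C ∧
      ∀ (V : Type) [NormedAddCommGroup V],
      ∀ (δ T ρ M : ℝ), δ ∈ Set.Ioo (0:ℝ) 1 → δ < T → 0 < ρ → 0 ≤ M →
      ∀ X : ℝ → V, Continuous X →
      (∀ r : ℝ, 0 < r → r ≤ T →
        ((⌊r / δ⌋ : ℝ) * δ) ^ γ * Real.exp (-ρ * r) * ‖X r - X ((⌊r / δ⌋ : ℝ) * δ)‖ ≤
          M * (r - (⌊r / δ⌋ : ℝ) * δ) ^ γ) →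
      ∀ t ∈ Set.Icc δ T,
        Real.exp (-ρ * t) * ∫ r in δ..t, ‖X r - X ((⌊r / δ⌋ : ℝ) * δ)‖ ≤
          C * M * δ ^ γ * T ^ (1 - γ) := by
  obtain ⟨hγ0, hγ1⟩ := hγ
  have h1γ : (0:ℝ) < 1 - γ := by linarith
  refine ⟨2 / (1 - γ), by positivity, ?_⟩
  intro V _ δ T ρ M hδ hδT hρ hM X hX hbound t ht
  obtain ⟨hδ0, hδ1⟩ := hδ
  obtain ⟨hδt, htT⟩ := ht
  have hT0 : 0 < T := lt_trans hδ0 hδT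
  have ht0 : 0 < t := lt_of_lt_of_le hδ0 hδt
  set K : ℝ := M * δ ^ γ * Real.exp (ρ * t) * 2 ^ γ with hK
  -- pointwise bound
  have hpt : ∀ r ∈ Set.Icc δ t,
      ‖X r - X ((⌊r / δ⌋ : ℝ) * δ)‖ ≤ K * r ^ (-γ) := by
    intro r hr
    obtain ⟨hδr, hrt⟩ := hr
    have hr0 : 0 < r := lt_of_lt_of_le hδ0 hδr
    set b : ℝ := (⌊r / δ⌋ : ℝ) * δ with hb
    have hk1 : (1:ℝ) ≤ (⌊r / δ⌋ : ℝ) := by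
      exact_mod_cast Int.le_floor.mpr (by
        rw [Int.cast_one, le_div_iff₀ hδ0, one_mul]; exact hδr)
    have hδb : δ ≤ b := by
      rw [hb]; nlinarith
    have hb0 : 0 < b := lt_of_lt_of_le hδ0 hδb
    have hbr : b ≤ r := by
      have := Int.floor_le (r / δ)
      rw [hb]; calc (⌊r / δ⌋ : ℝ) * δ ≤ (r / δ) * δ := by nlinarith
        _ = r := by field_simp
    have hrb : r - b < δ := by
      have := Int.lt_floor_add_one (r / δ)
      have : r / δ * δ < ((⌊r / δ⌋ : ℝ) + 1) * δ := by nlinarith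
      have hrd : r = r / δ * δ := by field_simp
      rw [hb]; nlinarith
    have hr2b : r / 2 ≤ b := by linarith
    have hh := hbound r hr0 (le_trans hrt htT)
    have hbγ : (0:ℝ) < b ^ γ := Real.rpow_pos_of_pos hb0 γ
    have he : (0:ℝ) < Real.exp (-ρ * r) := Real.exp_pos _
    have step1 : ‖X r - X b‖ ≤ M * (r - b) ^ γ / (b ^ γ * Real.exp (-ρ * r)) := by
      rw [le_div_iff₀ (by positivity)]
      calc ‖X r - X b‖ * (b ^ γ * Real.exp (-ρ * r))
          = b ^ γ * Real.exp (-ρ * r) * ‖X r - X b‖ := by ring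
        _ ≤ M * (r - b) ^ γ := hh
    have step1' : M * (r - b) ^ γ / (b ^ γ * Real.exp (-ρ * r))
        = M * (r - b) ^ γ * Real.exp (ρ * r) / b ^ γ := by
      rw [neg_mul, Real.exp_neg]
      field_simp
    have step2 : M * (r - b) ^ γ * Real.exp (ρ * r) / b ^ γ
        ≤ M * δ ^ γ * Real.exp (ρ * t) / (r / 2) ^ γ := by
      gcongr
      all_goals first
        | positivity
        | linarith
        | nlinarith
    have step3 : M * δ ^ γ * Real.exp (ρ * t) / (r / 2) ^ γ = K * r ^ (-γ) := by
      rw [hK, Real.div_rpow hr0.le (by norm_num), Real.rpow_neg hr0.le]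
      have hrγ : (0:ℝ) < r ^ γ := Real.rpow_pos_of_pos hr0 γ
      field_simp
    calc ‖X r - X b‖ ≤ M * (r - b) ^ γ / (b ^ γ * Real.exp (-ρ * r)) := step1
      _ = M * (r - b) ^ γ * Real.exp (ρ * r) / b ^ γ := step1'
      _ ≤ M * δ ^ γ * Real.exp (ρ * t) / (r / 2) ^ γ := step2
      _ = K * r ^ (-γ) := step3
  -- integrability of the majorant
  have hcg : ContinuousOn (fun r : ℝ => K * r ^ (-γ)) (Set.uIcc δ t) := by
    apply ContinuousOn.mul continuousOn_const
    apply ContinuousOn.rpow_const continuousOn_id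
    intro x hx
    rw [Set.uIcc_of_le hδt] at hx
    exact Or.inl (ne_of_gt (lt_of_lt_of_le hδ0 hx.1))
  have hint_g : IntervalIntegrable (fun r : ℝ => K * r ^ (-γ)) volume δ t :=
    hcg.intervalIntegrable
  -- measurability of the integrand
  have hmg : Measurable fun r : ℝ => (⌊r / δ⌋ : ℝ) * δ :=
    (measurable_from_top.comp (Int.measurable_floor.comp (measurable_id.div_const δ))).mul_const δ
  have hsm : AEStronglyMeasurable (fun r : ℝ => ‖X r - X ((⌊r / δ⌋ : ℝ) * δ)‖)
      (volume.restrict (Set.uIoc δ t)) :=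
    ((hX.stronglyMeasurable.sub
      (hX.stronglyMeasurable.comp_measurable hmg)).norm).aestronglyMeasurable
  have hK0 : 0 ≤ K := by positivity
  have hint_f : IntervalIntegrable
      (fun r : ℝ => ‖X r - X ((⌊r / δ⌋ : ℝ) * δ)‖) volume δ t := by
    apply hint_g.mono_fun' hsm
    filter_upwards [ae_restrict_mem measurableSet_uIoc] with r hr
    rw [Set.uIoc_of_le hδt] at hr
    simpa using hpt r ⟨hr.1.le, hr.2⟩
  have hmono : (∫ r in δ..t, ‖X r - X ((⌊r / δ⌋ : ℝ) * δ)‖)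
      ≤ ∫ r in δ..t, K * r ^ (-γ) :=
    intervalIntegral.integral_mono_on hδt hint_f hint_g hpt
  have hval : (∫ r in δ..t, K * r ^ (-γ))
      = K * ((t ^ (1 - γ) - δ ^ (1 - γ)) / (1 - γ)) := by
    rw [intervalIntegral.integral_const_mul, integral_rpow (Or.inl (by linarith))]
    have hexp1 : -γ + 1 = 1 - γ := by ring
    rw [hexp1]
  have hexp : Real.exp (-ρ * t) * Real.exp (ρ * t) = 1 := by
    rw [← Real.exp_add]; norm_num
  have hepos : (0:ℝ) < Real.exp (-ρ * t) := Real.exp_pos _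
  have h2γ : (2:ℝ) ^ γ ≤ 2 := by
    calc (2:ℝ) ^ γ ≤ (2:ℝ) ^ (1:ℝ) :=
          Real.rpow_le_rpow_of_exponent_le (by norm_num) hγ1.le
      _ = 2 := Real.rpow_one 2
  have htT' : t ^ (1 - γ) ≤ T ^ (1 - γ) :=
    Real.rpow_le_rpow ht0.le htT h1γ.le
  have hδγ0 : (0:ℝ) ≤ δ ^ (1 - γ) := Real.rpow_nonneg hδ0.le _
  have hδγpos : (0:ℝ) < δ ^ γ := Real.rpow_pos_of_pos hδ0 γ
  have h2γ0 : (0:ℝ) < (2:ℝ) ^ γ := Real.rpow_pos_of_pos (by norm_num) γ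
  calc Real.exp (-ρ * t) * ∫ r in δ..t, ‖X r - X ((⌊r / δ⌋ : ℝ) * δ)‖
      ≤ Real.exp (-ρ * t) * (K * ((t ^ (1 - γ) - δ ^ (1 - γ)) / (1 - γ))) := by
        rw [← hval]; exact mul_le_mul_of_nonneg_left hmono hepos.le
    _ = M * δ ^ γ * (2 ^ γ * ((t ^ (1 - γ) - δ ^ (1 - γ)) / (1 - γ))) := by
        rw [hK]
        linear_combination (M * δ ^ γ * 2 ^ γ * ((t ^ (1 - γ) - δ ^ (1 - γ)) / (1 - γ))) * hexp
    _ ≤ M * δ ^ γ * (2 * (T ^ (1 - γ) / (1 - γ))) := by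
        apply mul_le_mul_of_nonneg_left _ (by positivity : (0:ℝ) ≤ M * δ ^ γ)
        have hS0 : 0 ≤ t ^ (1-γ) - δ ^ (1-γ) :=
          sub_nonneg.mpr (Real.rpow_le_rpow hδ0.le hδt h1γ.le)
        rw [mul_div_assoc', mul_div_assoc', div_le_div_iff₀ h1γ h1γ]
        nlinarith [mul_nonneg (sub_nonneg.mpr h2γ) hS0]
    _ = 2 / (1 - γ) * M * δ ^ γ * T ^ (1 - γ) := by ring
end
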